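/- arXiv:2209.12860 — 2 statements merged into one kernel-verified Lean document; each statement's English description precedes it below -/
import Mathlib

section
/- For every m ≥ 0 one has F·y_m − q^{−(c+2m)}·y_m·F = [m+1]·y_{m+1}. (This identity holds in any associative algebra; no relations between F and G are needed.) -/
open scoped BigOperators

noncomputable section

def q : RatFunc ℚ := RatFunc.X

/-- Quantum integer `[n] = (q^n - q^{-n})/(q - q^{-1})`. -/
def qi (n : ℤ) : RatFunc ℚ := (q ^ n - q ^ (-n)) / (q - q⁻¹)

/-- Quantum factorial `[n]! = [1][2]⋯[n]`. -/
def qfac : ℕ → RatFunc ℚ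
  | 0 => 1
  | n + 1 => qfac n * qi (n + 1)

/-- Divided power `F^{(n)} = F^n/[n]!`. -/
def dpow {A : Type*} [Ring A] [Algebra (RatFunc ℚ) A] (F : A) (n : ℕ) : A :=
  (qfac n)⁻¹ • F ^ n

/-- `y_m = Σ_{r+s=m} (−1)^r q^{−r(m+c−1)} F^{(s)} G F^{(r)}`. -/
def yv {A : Type*} [Ring A] [Algebra (RatFunc ℚ) A] (F G : A) (c : ℤ) (m : ℕ) : A :=
  ∑ r ∈ Finset.range (m + 1),
    ((-1 : RatFunc ℚ) ^ r * q ^ (-(r : ℤ) * ((m : ℤ) + c - 1))) •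
      (dpow F (m - r) * G * dpow F r)

lemma hq0 : q ≠ 0 := RatFunc.X_ne_zero

lemma qpow_ne_one {n : ℕ} (h : 0 < n) : q ^ n ≠ 1 := by
  simp only [q, RatFunc.X]
  rw [← map_pow, ← map_one (algebraMap (Polynomial ℚ) (RatFunc ℚ))]
  intro hc
  have h2 := RatFunc.algebraMap_injective (K := ℚ) hc
  have h3 := congrArg (Polynomial.coeff · 0) h2
  simp [Polynomial.coeff_X_pow] at h3
  omega

lemma hden : q - q⁻¹ ≠ 0 := by
  intro h
  have h2 : q * q = 1 := by
    have := congrArg (· * q) h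
    simp only [sub_mul, inv_mul_cancel₀ hq0, zero_mul] at this
    linear_combination this
  exact qpow_ne_one (n := 2) (by norm_num) (by rw [sq]; exact h2)

lemma qi_nat_ne_zero {n : ℕ} (h : 0 < n) : qi n ≠ 0 := by
  unfold qi
  apply div_ne_zero _ hden
  rw [sub_ne_zero]
  intro hc
  have h1 : q ^ ((2*n : ℕ) : ℤ) = 1 := by
    push_cast
    rw [two_mul, zpow_add₀ hq0]
    nth_rewrite 1 [hc]
    rw [← zpow_add₀ hq0]
    simp
  rw [zpow_natCast] at h1
  exact qpow_ne_one (by omega) h1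

lemma qi_zero : qi 0 = 0 := by simp [qi]

lemma qfac_ne_zero (n : ℕ) : qfac n ≠ 0 := by
  induction n with
  | zero => simp [qfac]
  | succ k ih =>
    rw [qfac]
    exact mul_ne_zero ih (by exact_mod_cast qi_nat_ne_zero (by omega))

lemma F_mul_dpow {A : Type*} [Ring A] [Algebra (RatFunc ℚ) A] (F : A) (n : ℕ) :
    F * dpow F n = qi (n + 1) • dpow F (n + 1) := by
  unfold dpow
  rw [mul_smul_comm, smul_smul, ← pow_succ']
  congr 1
  rw [qfac]
  have h1 := qfac_ne_zero n
  have h2 : qi ((n:ℤ) + 1) ≠ 0 := by exact_mod_cast qi_nat_ne_zero (n := n+1) (by omega)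
  field_simp

lemma dpow_mul_F {A : Type*} [Ring A] [Algebra (RatFunc ℚ) A] (F : A) (n : ℕ) :
    dpow F n * F = qi (n + 1) • dpow F (n + 1) := by
  unfold dpow
  rw [smul_mul_assoc, smul_smul, ← pow_succ]
  congr 1
  rw [qfac]
  have h1 := qfac_ne_zero n
  have h2 : qi ((n:ℤ) + 1) ≠ 0 := by exact_mod_cast qi_nat_ne_zero (n := n+1) (by omega)
  field_simp

lemma keynum (a M c : ℤ) :
    q^(-a*(M+c-1)) * (q^(M+1-a) - q^(-(M+1-a))) +
      q^(-(c+2*M)) * q^(-(a-1)*(M+c-1)) * (q^a - q^(-a))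
      = (q^(M+1) - q^(-(M+1))) * q^(-a*(M+c)) := by
  simp only [mul_sub, sub_mul, ← zpow_add₀ hq0]
  rw [show -a * (M + c) - -a * 1 + (M + 1 - a) = M + 1 + -a * (M + c) by ring,
      show -a * (M + c) - -a * 1 + -(M + 1 - a)
        = -(c + 2 * M) + (-(a - 1) * (M + c) - -(a - 1) * 1) + a by ring,
      show -(c + 2 * M) + (-(a - 1) * (M + c) - -(a - 1) * 1) + -a
        = -(M + 1) + -a * (M + c) by ring]
  ring

lemma key (a M c : ℤ) :
    q^(-a*(M+c-1)) * qi (M+1-a) + q^(-(c+2*M)) * q^(-(a-1)*(M+c-1)) * qi a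
      = qi (M+1) * q^(-a*(M+c)) := by
  unfold qi
  rw [← mul_div_assoc, ← mul_div_assoc, ← add_div, div_mul_eq_mul_div, keynum]

/-- For every m ≥ 0, `F·y_m − q^{−(c+2m)}·y_m·F = [m+1]·y_{m+1}`, in any associative
algebra over ℚ(q), with no relations between F and G. -/
theorem F_mul_yv {A : Type*} [Ring A] [Algebra (RatFunc ℚ) A] (F G : A) (c : ℤ) (m : ℕ) :
    F * yv F G c m - q ^ (-(c + 2 * (m : ℤ))) • (yv F G c m * F)
      = qi ((m : ℤ) + 1) • yv F G c (m + 1) := by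
  set T : ℕ → A := fun r => dpow F (m + 1 - r) * G * dpow F r with hT
  have h1 : F * yv F G c m
      = ∑ r ∈ Finset.range (m + 2),
          ((-1 : RatFunc ℚ) ^ r * q ^ (-(r : ℤ) * ((m : ℤ) + c - 1))
            * qi ((m : ℤ) + 1 - r)) • T r := by
    rw [yv, Finset.mul_sum, Finset.sum_range_succ (n := m + 1)]
    rw [show (m : ℤ) + 1 - ((m + 1 : ℕ) : ℤ) = 0 by push_cast; ring, qi_zero,
      mul_zero, zero_smul, add_zero]
    refine Finset.sum_congr rfl fun r hr => ?_
    have hrm : r ≤ m := by have := Finset.mem_range.mp hr; omega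
    have e1 : m - r + 1 = m + 1 - r := by omega
    have e2 : ((m - r : ℕ) : ℤ) + 1 = (m : ℤ) + 1 - r := by omega
    simp only [hT]
    rw [mul_smul_comm, ← mul_assoc, ← mul_assoc, F_mul_dpow, e1, e2,
      smul_mul_assoc, smul_mul_assoc, smul_smul]
  have h2 : q ^ (-(c + 2 * (m : ℤ))) • (yv F G c m * F)
      = ∑ r ∈ Finset.range (m + 2),
          (-(((-1 : RatFunc ℚ) ^ r)
            * (q ^ (-(c + 2 * (m : ℤ))) * q ^ (-((r : ℤ) - 1) * ((m : ℤ) + c - 1))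
              * qi r))) • T r := by
    rw [Finset.sum_range_succ' _ (m + 1)]
    simp only [Nat.cast_zero, qi_zero, mul_zero, neg_zero, zero_smul, add_zero]
    rw [yv, Finset.sum_mul, Finset.smul_sum]
    refine Finset.sum_congr rfl fun r hr => ?_
    simp only [hT]
    have e1 : m - r = m + 1 - (r + 1) := by omega
    rw [smul_mul_assoc, mul_assoc, dpow_mul_F, mul_smul_comm, smul_smul, smul_smul, e1]
    congr 1
    push_cast
    ring
  have h3 : qi ((m : ℤ) + 1) • yv F G c (m + 1)
      = ∑ r ∈ Finset.range (m + 2),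
          (qi ((m : ℤ) + 1) * ((-1 : RatFunc ℚ) ^ r * q ^ (-(r : ℤ) * ((m : ℤ) + c)))) • T r := by
    rw [yv, Finset.smul_sum]
    refine Finset.sum_congr rfl fun r hr => ?_
    simp only [hT]
    rw [smul_smul]
    congr 2
    push_cast
    ring
  rw [h1, h2, h3, ← Finset.sum_sub_distrib]
  refine Finset.sum_congr rfl fun r hr => ?_
  rw [← sub_smul]
  congr 1
  rw [sub_neg_eq_add]
  have hk := key (r : ℤ) (m : ℤ) c
  linear_combination ((-1 : RatFunc ℚ) ^ r) * hk
end
end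

section
/- With B₁ = F₁ + E₂K₁′, B₂ = F₂ + E₁K₂′, k₁ = K₁K₂′, and k₂ = K₂K₁′, one has B₂·B₁ − B₁·B₂ = (k₁ − k₂)/(q − q^{−1}). -/
noncomputable section

/-- In the Drinfeld double for two vertices with c₁₂ = c₂₁ = 0, the ıquantum group
generators `B₁ = F₁ + E₂K₁′`, `B₂ = F₂ + E₁K₂′` satisfy
`B₂·B₁ − B₁·B₂ = (k₁ − k₂)/(q − q^{−1})`, where `k₁ = K₁K₂′`, `k₂ = K₂K₁′`. -/
theorem B_comm {A : Type*} [Ring A] [Algebra (RatFunc ℚ) A]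
    (E₁ F₁ K₁ K₁' E₂ F₂ K₂ K₂' : A)
    -- K's and K′'s pairwise commute
    (hKK₁ : K₁ * K₁' = K₁' * K₁) (hKK₂ : K₁ * K₂ = K₂ * K₁)
    (hKK₃ : K₁ * K₂' = K₂' * K₁) (hKK₄ : K₁' * K₂ = K₂ * K₁')
    (hKK₅ : K₁' * K₂' = K₂' * K₁') (hKK₆ : K₂ * K₂' = K₂' * K₂)
    -- diagonal Cartan actions
    (hK1E1 : K₁ * E₁ = q ^ (2 : ℤ) • (E₁ * K₁))
    (hK1F1 : K₁ * F₁ = q ^ (-2 : ℤ) • (F₁ * K₁))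
    (hK1'E1 : K₁' * E₁ = q ^ (-2 : ℤ) • (E₁ * K₁'))
    (hK1'F1 : K₁' * F₁ = q ^ (2 : ℤ) • (F₁ * K₁'))
    (hK2E2 : K₂ * E₂ = q ^ (2 : ℤ) • (E₂ * K₂))
    (hK2F2 : K₂ * F₂ = q ^ (-2 : ℤ) • (F₂ * K₂))
    (hK2'E2 : K₂' * E₂ = q ^ (-2 : ℤ) • (E₂ * K₂'))
    (hK2'F2 : K₂' * F₂ = q ^ (2 : ℤ) • (F₂ * K₂'))
    -- cross Cartan actions (c₁₂ = c₂₁ = 0)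
    (hK1E2 : K₁ * E₂ = E₂ * K₁) (hK1F2 : K₁ * F₂ = F₂ * K₁)
    (hK1'E2 : K₁' * E₂ = E₂ * K₁') (hK1'F2 : K₁' * F₂ = F₂ * K₁')
    (hK2E1 : K₂ * E₁ = E₁ * K₂) (hK2F1 : K₂ * F₁ = F₁ * K₂)
    (hK2'E1 : K₂' * E₁ = E₁ * K₂') (hK2'F1 : K₂' * F₁ = F₁ * K₂')
    -- E-F relations
    (hE1F1 : E₁ * F₁ - F₁ * E₁ = (q - q⁻¹)⁻¹ • (K₁ - K₁'))
    (hE2F2 : E₂ * F₂ - F₂ * E₂ = (q - q⁻¹)⁻¹ • (K₂ - K₂'))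
    (hE1F2 : E₁ * F₂ = F₂ * E₁) (hE2F1 : E₂ * F₁ = F₁ * E₂)
    -- Serre relations for c = 0
    (hEE : E₁ * E₂ = E₂ * E₁) (hFF : F₁ * F₂ = F₂ * F₁) :
    (F₂ + E₁ * K₂') * (F₁ + E₂ * K₁') - (F₁ + E₂ * K₁') * (F₂ + E₁ * K₂')
      = (q - q⁻¹)⁻¹ • (K₁ * K₂' - K₂ * K₁') := by
  have h1 : E₁ * K₂' * F₁ = E₁ * F₁ * K₂' := by rw [mul_assoc, hK2'F1, mul_assoc]
  have h2 : E₂ * K₁' * F₂ = E₂ * F₂ * K₁' := by rw [mul_assoc, hK1'F2, mul_assoc]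
  have h3 : E₁ * K₂' * (E₂ * K₁') = E₂ * K₁' * (E₁ * K₂') := by
    calc E₁ * K₂' * (E₂ * K₁') = E₁ * (K₂' * E₂) * K₁' := by noncomm_ring
    _ = q ^ (-2 : ℤ) • (E₁ * E₂ * (K₂' * K₁')) := by
        rw [hK2'E2]; simp [mul_smul_comm, smul_mul_assoc, mul_assoc]
    _ = q ^ (-2 : ℤ) • (E₂ * E₁ * (K₁' * K₂')) := by rw [hEE, hKK₅]
    _ = E₂ * (K₁' * E₁) * K₂' := by
        rw [hK1'E1]; simp [mul_smul_comm, smul_mul_assoc, mul_assoc]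
    _ = E₂ * K₁' * (E₁ * K₂') := by noncomm_ring
  have key : (F₂ + E₁ * K₂') * (F₁ + E₂ * K₁') - (F₁ + E₂ * K₁') * (F₂ + E₁ * K₂')
      = (E₁ * F₁ - F₁ * E₁) * K₂' - (E₂ * F₂ - F₂ * E₂) * K₁' := by
    linear_combination (norm := noncomm_ring) -hFF + h1 + h3 - h2
  rw [key, hE1F1, hE2F2, smul_mul_assoc, smul_mul_assoc, ← smul_sub]
  congr 1
  rw [sub_mul, sub_mul, hKK₅]
  abel
end
end
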